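/- arXiv:math/0610526 — 5 statements merged into one kernel-verified Lean document; each statement's English description precedes it below -/
import Mathlib

section
/- Let L be a multiplicative abelian group, g = (g_1,…,g_n) a local monodromy vector of rank r on L, and β a convoluter for n points. Then the total determinant is preserved by the Katz transformation: Det(κ(β,g)) = Det(g). In particular, if Det(g) = 1 then Det(κ(β,g)) = 1. -/
open Finset

/-- The degree of a divisor (a finitely supported `ℤ`-valued function) on an abelian group. -/
noncomputable def divDeg {L : Type*} [CommGroup L] (g : L →₀ ℤ) : ℤ :=
  g.sum fun _ m => m

/-- A convoluter for `n` points: elements `β^{H_i}, β^{V_i}, β^{U_i}, β^T` of `L`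
subject to the relations coming from the diagonal configuration. -/
structure Convoluter (L : Type*) [CommGroup L] (n : ℕ) where
  H : Fin n → L
  V : Fin n → L
  U : Fin n → L
  T : L
  relH : T * ∏ i, H i = 1
  relV : T * ∏ i, V i = 1
  relU : ∀ i, U i = H i * V i * T

/-- The defect `δ(β,g) = (n-2)r - Σ_i m_i((β^{H_i})⁻¹)`. -/
noncomputable def defect {L : Type*} [CommGroup L] {n : ℕ} (β : Convoluter L n)
    (g : Fin n → (L →₀ ℤ)) (r : ℤ) : ℤ :=
  ((n : ℤ) - 2) * r - ∑ i, g i (β.H i)⁻¹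

/-- The local Katz transformation
`κ_i(β,g) = (m_i((β^{H_i})⁻¹) + δ)·[β^{V_i}] - m_i((β^{H_i})⁻¹)·[β^{V_i}β^T] + Σ_α m_i(α)·[αβ^{U_i}]`. -/
noncomputable def katz {L : Type*} [CommGroup L] {n : ℕ} (β : Convoluter L n)
    (g : Fin n → (L →₀ ℤ)) (r : ℤ) (i : Fin n) : L →₀ ℤ :=
  Finsupp.single (β.V i) (g i (β.H i)⁻¹ + defect β g r)
    - Finsupp.single (β.V i * β.T) (g i (β.H i)⁻¹)
    + Finsupp.mapDomain (fun α => α * β.U i) (g i)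

/-- The determinant `det(g) = ∏_α α^{m(α)}` of a divisor on an abelian group. -/
noncomputable def divDet {L : Type*} [CommGroup L] (g : L →₀ ℤ) : L :=
  g.prod fun α m => α ^ m

/-!
Translating a divisor of degree `r` by `c` multiplies its determinant by `c ^ r`, so each local
factor satisfies `det κ_i = det g_i · (β^{V_i})^δ · (β^T)^{-m_i((β^{H_i})⁻¹)} · (β^{U_i})^r`.
The relations of a convoluter give `∏ β^{V_i} = (β^T)⁻¹` and `∏ β^{U_i} = (β^T)^{n-2}`, so the
correction factors multiply to `(β^T)^e` with `e = -δ - Σ_i m_i((β^{H_i})⁻¹) + (n-2)r`, which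
vanishes by the definition of the defect.
-/

theorem Finset.prod_zpow_eq_zpow_sum {ι G : Type*} [CommGroup G] (s : Finset ι) (f : ι → ℤ)
    (a : G) : ∏ i ∈ s, a ^ f i = a ^ ∑ i ∈ s, f i := by
  classical
  induction s using Finset.induction with
  | empty => simp
  | insert _ _ h ih => rw [prod_insert h, sum_insert h, ih, zpow_add]

section divDet

variable {L : Type*} [CommGroup L]

theorem divDet_add (f g : L →₀ ℤ) : divDet (f + g) = divDet f * divDet g :=
  Finsupp.prod_add_index' (fun a => zpow_zero a) (fun a => zpow_add a)

theorem divDet_neg (g : L →₀ ℤ) : divDet (-g) = (divDet g)⁻¹ := by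
  rw [divDet, Finsupp.prod_neg_index (fun a => zpow_zero a), divDet, Finsupp.prod,
    Finsupp.prod, ← prod_inv_distrib]
  simp only [zpow_neg]

theorem divDet_sub (f g : L →₀ ℤ) : divDet (f - g) = divDet f / divDet g := by
  rw [sub_eq_add_neg, divDet_add, divDet_neg, div_eq_mul_inv]

theorem divDet_single (a : L) (m : ℤ) : divDet (Finsupp.single a m) = a ^ m :=
  Finsupp.prod_single_index (zpow_zero a)

theorem divDet_mapDomain_mul_right (c : L) (g : L →₀ ℤ) :
    divDet (g.mapDomain (· * c)) = divDet g * c ^ divDeg g := by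
  rw [divDet, Finsupp.prod_mapDomain_index (fun _ => zpow_zero _) (fun _ => zpow_add _),
    divDet, divDeg, Finsupp.prod, Finsupp.prod, Finsupp.sum, ← prod_zpow_eq_zpow_sum,
    ← prod_mul_distrib]
  simp only [mul_zpow]

end divDet

namespace Convoluter

variable {L : Type*} [CommGroup L] {n : ℕ} (β : Convoluter L n)

theorem prod_H : ∏ i, β.H i = β.T⁻¹ :=
  eq_inv_of_mul_eq_one_right β.relH

theorem prod_V : ∏ i, β.V i = β.T⁻¹ :=
  eq_inv_of_mul_eq_one_right β.relV

theorem prod_U : ∏ i, β.U i = β.T ^ ((n : ℤ) - 2) := by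
  simp only [β.relU, prod_mul_distrib, prod_H, prod_V, prod_const, card_univ, Fintype.card_fin]
  rw [zpow_sub, zpow_natCast]
  group

end Convoluter

theorem divDet_katz {L : Type*} [CommGroup L] {n : ℕ} (β : Convoluter L n)
    (g : Fin n → (L →₀ ℤ)) (r : ℤ) (i : Fin n) (hg : divDeg (g i) = r) :
    divDet (katz β g r i) = divDet (g i) * β.V i ^ defect β g r *
      β.T ^ (-g i (β.H i)⁻¹) * β.U i ^ r := by
  rw [katz, divDet_add, divDet_sub, divDet_single, divDet_single, divDet_mapDomain_mul_right, hg]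
  apply Additive.ofMul.injective
  simp only [ofMul_mul, ofMul_div, ofMul_zpow]
  module

/-- The total determinant `Det(g) = det(g_1)⋯det(g_n)` is preserved by the Katz
transformation; in particular if `Det(g) = 1` then `Det(κ(β,g)) = 1`. -/
theorem katz_total_det {L : Type*} [CommGroup L] {n : ℕ} (r : ℤ)
    (g : Fin n → (L →₀ ℤ)) (hg : ∀ i, divDeg (g i) = r) (β : Convoluter L n) :
    (∏ i, divDet (katz β g r i)) = ∏ i, divDet (g i) ∧
    ((∏ i, divDet (g i)) = 1 → (∏ i, divDet (katz β g r i)) = 1) := by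
  have key : ∏ i, divDet (katz β g r i) = ∏ i, divDet (g i) := calc
    ∏ i, divDet (katz β g r i)
        = ∏ i, divDet (g i) * β.V i ^ defect β g r * β.T ^ (-g i (β.H i)⁻¹) * β.U i ^ r :=
          prod_congr rfl fun i _ => divDet_katz β g r i (hg i)
    _ = (∏ i, divDet (g i)) * (∏ i, β.V i) ^ defect β g r *
          β.T ^ (∑ i, -g i (β.H i)⁻¹) * (∏ i, β.U i) ^ r := by
          simp only [prod_mul_distrib, prod_zpow, prod_zpow_eq_zpow_sum]
    _ = ∏ i, divDet (g i) := by
          rw [β.prod_V, β.prod_U, defect, sum_neg_distrib]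
          group
  exact ⟨key, fun h => key.trans h⟩
end

section
/- Let L be a multiplicative abelian group, g = (g_1,…,g_n) a local monodromy vector of rank r on L, and β a convoluter. Let γ := c*β* be the inverse convoluter, defined by γ^{H_i} = (β^{V_i})^{−1}, γ^{V_i} = (β^{H_i})^{−1}, γ^{U_i} = (β^{U_i})^{−1}, γ^T = (β^T)^{−1}. Assume the conventions hold for the pair (β,g): β^T ≠ 1, and for every i and every α in the support of g_i one has α·β^{H_i}·β^T ≠ 1; and assume the same conventions hold for the pair (γ, κ(β,g)): γ^T ≠ 1, and for every i and every φ in the support of κ_i(β,g) one has φ·γ^{H_i}·γ^T ≠ 1. Then the Katz transformation is involutive on local monodromy data: κ(c*β*, κ(β,g)) = g. -/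
open Finset

/-- The inverse convoluter `c*β*`, with `(c*β*)^{H_i} = (β^{V_i})⁻¹`,
`(c*β*)^{V_i} = (β^{H_i})⁻¹`, `(c*β*)^{U_i} = (β^{U_i})⁻¹`, `(c*β*)^T = (β^T)⁻¹`. -/
def Convoluter.star {L : Type*} [CommGroup L] {n : ℕ} (β : Convoluter L n) :
    Convoluter L n where
  H i := (β.V i)⁻¹
  V i := (β.H i)⁻¹
  U i := (β.U i)⁻¹
  T := (β.T)⁻¹
  relH := by
    have h : (β.T * ∏ i, β.V i)⁻¹ = 1 := by rw [β.relV, inv_one]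
    simpa [mul_inv, Finset.prod_inv_distrib, mul_comm] using h
  relV := by
    have h : (β.T * ∏ i, β.H i)⁻¹ = 1 := by rw [β.relH, inv_one]
    simpa [mul_inv, Finset.prod_inv_distrib, mul_comm] using h
  relU i := by
    show (β.U i)⁻¹ = (β.V i)⁻¹ * (β.H i)⁻¹ * β.T⁻¹
    rw [β.relU i, mul_inv, mul_inv, mul_comm (β.H i)⁻¹ (β.V i)⁻¹]

/-
The Katz transformation translates each divisor by `β^{U_i}` and corrects it at the two points
`β^{V_i}` and `β^{V_i}β^T`. The conventions say that the translate of `g_i` vanishes at `β^{V_i}`,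
so `κ_i(β,g)` has coefficient `m_i((β^{H_i})⁻¹) + δ` there. Since `(c*β*)^{H_i} = (β^{V_i})⁻¹`,
this is exactly the coefficient read off by the second transformation; summing over `i` gives
defect `-δ` for the pair `(c*β*, κ(β,g))` in rank `r + δ`. The second transformation then
translates back by `(β^{U_i})⁻¹`, and its two correction terms cancel the images of the first two.
-/

theorem Finsupp.mapDomain_mul_inv_mapDomain_mul {L M : Type*} [Group L] [AddCommMonoid M]
    (f : L →₀ M) (a : L) :
    Finsupp.mapDomain (· * a⁻¹) (Finsupp.mapDomain (· * a) f) = f := by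
  rw [← Finsupp.mapDomain_comp]
  convert Finsupp.mapDomain_id
  ext x
  simp

namespace Convoluter

variable {L : Type*} [CommGroup L] {n : ℕ} (β : Convoluter L n)

@[simp] theorem star_H (i : Fin n) : β.star.H i = (β.V i)⁻¹ := rfl
@[simp] theorem star_V (i : Fin n) : β.star.V i = (β.H i)⁻¹ := rfl
@[simp] theorem star_U (i : Fin n) : β.star.U i = (β.U i)⁻¹ := rfl
@[simp] theorem star_T : β.star.T = β.T⁻¹ := rfl

theorem inv_H_mul_T_mul_U (i : Fin n) : (β.H i * β.T)⁻¹ * β.U i = β.V i := by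
  rw [β.relU i, mul_right_comm, inv_mul_cancel_left]

theorem V_mul_T_mul_U_inv (i : Fin n) : β.V i * β.T * (β.U i)⁻¹ = (β.H i)⁻¹ := by
  rw [β.relU i]; group

theorem V_mul_U_inv (i : Fin n) : β.V i * (β.U i)⁻¹ = (β.H i)⁻¹ * β.T⁻¹ := by
  rw [← β.V_mul_T_mul_U_inv i, mul_right_comm _ β.T, mul_inv_cancel_right]

end Convoluter

section Katz

variable {L : Type*} [CommGroup L] {n : ℕ} (β : Convoluter L n) (g : Fin n → (L →₀ ℤ)) (r : ℤ)

theorem katz_apply_V (hβT : β.T ≠ 1) (i : Fin n)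
    (hβconv : ∀ α ∈ (g i).support, α * β.H i * β.T ≠ 1) :
    katz β g r i (β.V i) = g i (β.H i)⁻¹ + defect β g r := by
  have hg : g i (β.H i * β.T)⁻¹ = 0 :=
    Finsupp.notMem_support_iff.mp fun h => hβconv _ h (by group)
  have htranslate : Finsupp.mapDomain (· * β.U i) (g i) (β.V i) = 0 := by
    rw [← β.inv_H_mul_T_mul_U i, Finsupp.mapDomain_apply (mul_left_injective _), hg]
  have hVT : β.V i * β.T ≠ β.V i := by simpa using hβT
  rw [katz, Finsupp.add_apply, Finsupp.sub_apply, htranslate, Finsupp.single_eq_same,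
    Finsupp.single_eq_of_ne' hVT]
  ring

theorem defect_star_katz (hβT : β.T ≠ 1)
    (hβconv : ∀ i, ∀ α ∈ (g i).support, α * β.H i * β.T ≠ 1) :
    defect β.star (katz β g r) (r + defect β g r) = -defect β g r := by
  simp only [defect, Convoluter.star_H, inv_inv, katz_apply_V β g r hβT _ (hβconv _),
    Finset.sum_add_distrib, Finset.sum_const, Finset.card_univ, Fintype.card_fin, nsmul_eq_mul]
  ring

theorem katz_star_apply (h : Fin n → (L →₀ ℤ)) (s : ℤ) (i : Fin n) :
    katz β.star h s i =
      Finsupp.single (β.H i)⁻¹ (h i (β.V i) + defect β.star h s)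
        - Finsupp.single ((β.H i)⁻¹ * β.T⁻¹) (h i (β.V i))
        + Finsupp.mapDomain (· * (β.U i)⁻¹) (h i) := by
  simp only [katz, Convoluter.star_H, Convoluter.star_V, Convoluter.star_U, Convoluter.star_T,
    inv_inv]

theorem mapDomain_mul_U_inv_katz (i : Fin n) :
    Finsupp.mapDomain (· * (β.U i)⁻¹) (katz β g r i) =
      Finsupp.single ((β.H i)⁻¹ * β.T⁻¹) (g i (β.H i)⁻¹ + defect β g r)
        - Finsupp.single (β.H i)⁻¹ (g i (β.H i)⁻¹) + g i := by
  rw [katz, Finsupp.mapDomain_add, Finsupp.mapDomain_sub, Finsupp.mapDomain_single,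
    Finsupp.mapDomain_single, Finsupp.mapDomain_mul_inv_mapDomain_mul, β.V_mul_U_inv,
    β.V_mul_T_mul_U_inv]

end Katz

theorem katz_involutive_general {L : Type*} [CommGroup L] {n : ℕ} (r : ℤ)
    (g : Fin n → (L →₀ ℤ)) (β : Convoluter L n)
    (hβT : β.T ≠ 1)
    (hβconv : ∀ i, ∀ α ∈ (g i).support, α * β.H i * β.T ≠ 1) :
    ∀ i, katz β.star (katz β g r) (r + defect β g r) i = g i := by
  intro i
  rw [katz_star_apply, defect_star_katz β g r hβT hβconv, katz_apply_V β g r hβT i (hβconv i),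
    mapDomain_mul_U_inv_katz, add_neg_cancel_right]
  abel

/-- Involutivity of the Katz transformation on local monodromy data:
under the conventions for both the pair `(β, g)` and the inverse pair
`(c*β*, κ(β,g))`, one has `κ(c*β*, κ(β,g)) = g`. -/
theorem katz_involutive {L : Type*} [CommGroup L] {n : ℕ} (r : ℤ)
    (g : Fin n → (L →₀ ℤ)) (hg : ∀ i, divDeg (g i) = r) (β : Convoluter L n)
    (hβT : β.T ≠ 1)
    (hβconv : ∀ i, ∀ α ∈ (g i).support, α * β.H i * β.T ≠ 1)
    (hγT : β.star.T ≠ 1)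
    (hγconv : ∀ i, ∀ φ ∈ (katz β g r i).support, φ * β.star.H i * β.star.T ≠ 1) :
    ∀ i, katz β.star (katz β g r) (r + defect β g r) i = g i :=
  katz_involutive_general r g β hβT hβconv
end

section
/- Let r ≥ 1 and let m : ℝ → ℕ be a finitely supported function with Σ_α m(α) = r (a multiplicity function of total degree r). An arrangement of m is a function a : ZMod r → ℝ taking each value α exactly m(α) times; a descent of a is an index t ∈ ZMod r with a(t) ≥ a(t+1). Then the minimum, over all arrangements a of m, of the number of descents of a equals the maximal multiplicity max_α m(α). In particular, every arrangement has at least max_α m(α) descents, and some arrangement has exactly that many. -/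
open Finset

/-- An arrangement of a multiplicity function `m : ℝ →₀ ℕ` of total mass `r` is a function
`a : ZMod r → ℝ` taking each value `α` exactly `m α` times. -/
def IsArrangement (r : ℕ) [NeZero r] (m : ℝ →₀ ℕ) (a : ZMod r → ℝ) : Prop :=
  ∀ α : ℝ, (Finset.univ.filter fun t => a t = α).card = m α

/-- The number of descents of an arrangement: indices `t` (cyclic mod `r`) with
`a t ≥ a (t+1)`. -/
noncomputable def descents (r : ℕ) [NeZero r] (a : ZMod r → ℝ) : ℕ :=
  (Finset.univ.filter fun t : ZMod r => a (t + 1) ≤ a t).card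

/-!
If `a t = a t'` for two positions `t ≠ t'`, the values cannot increase strictly all the way
from `t` to `t'`; so sending each position `t` to the first descent at or after it is injective
on every fibre of `a`, and every arrangement has at least `m α` descents for each `α`.

Conversely, read the pairs `(j, α)` with `j < m α` in lexicographic order: layer `j` lists
increasingly the values of multiplicity `> j`. Inside a layer the values increase strictly, so
every descent but the cyclic one ends a layer and the layer index is injective on descents;
there are `max_α m α` layers.
-/

lemma ZMod.val_add_one_of_lt {n : ℕ} {t : ZMod n} (ht : t.val + 1 < n) :
    (t + 1).val = t.val + 1 := by
  have h1 : (1 : ZMod n).val = 1 := by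
    rw [ZMod.val_one_eq_one_mod, Nat.mod_eq_of_lt (by omega)]
  rw [ZMod.val_add_of_lt (h1 ▸ ht), h1]

section LowerBound

variable {r : ℕ} [NeZero r] {β : Type*} [LinearOrder β]

lemma exists_descent_from (a : ZMod r → β) (t : ZMod r) :
    ∃ k : ℕ, a (t + k + 1) ≤ a (t + k) := by
  by_contra! h
  have hmono : StrictMono fun k : ℕ => a (t + k) :=
    strictMono_nat_of_lt_succ fun k => by simpa [add_assoc] using h k
  simpa using hmono (NeZero.pos r)

noncomputable def descentOffset (a : ZMod r → β) (t : ZMod r) : ℕ :=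
  Nat.find (exists_descent_from a t)

lemma descent_at_descentOffset (a : ZMod r → β) (t : ZMod r) :
    a (t + descentOffset a t + 1) ≤ a (t + descentOffset a t) :=
  Nat.find_spec (exists_descent_from a t)

lemma strictMonoOn_Iic_descentOffset (a : ZMod r → β) (t : ZMod r) :
    StrictMonoOn (fun k : ℕ => a (t + k)) (Set.Iic (descentOffset a t)) :=
  strictMonoOn_Iic_of_lt_succ fun k hk => by
    simpa [add_assoc] using lt_of_not_ge (Nat.find_min (exists_descent_from a t) hk)

lemma eq_of_add_descentOffset_eq {a : ZMod r → β} {s t : ZMod r} (hval : a s = a t)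
    (hle : descentOffset a s ≤ descentOffset a t)
    (h : s + descentOffset a s = t + descentOffset a t) : s = t := by
  obtain ⟨k, hk⟩ := Nat.exists_eq_add_of_le hle
  have hs : s = t + k := by
    rw [hk, Nat.cast_add] at h
    linear_combination h
  obtain rfl | hpos := Nat.eq_zero_or_pos k
  · simpa using hs
  · have : a t < a s := by
      simpa [← hs] using strictMonoOn_Iic_descentOffset a t (Set.mem_Iic.2 (Nat.zero_le _))
        (Set.mem_Iic.2 (hk ▸ Nat.le_add_left k _)) hpos
    exact absurd hval this.ne'

lemma card_fiber_le_descents (a : ZMod r → ℝ) (α : ℝ) :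
    #{t | a t = α} ≤ descents r a := by
  refine card_le_card_of_injOn (fun t => t + descentOffset a t) (fun t _ => ?_) ?_
  · simpa [descents] using descent_at_descentOffset a t
  · intro s hs t ht h
    simp only [coe_filter, mem_univ, true_and, Set.mem_ofPred_eq] at hs ht
    obtain hle | hle := le_total (descentOffset a s) (descentOffset a t)
    · exact eq_of_add_descentOffset_eq (hs.trans ht.symm) hle h
    · exact (eq_of_add_descentOffset_eq (ht.trans hs.symm) hle h.symm).symm

lemma sup_le_descents {m : ℝ →₀ ℕ} {a : ZMod r → ℝ} (ha : IsArrangement r m a) :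
    m.support.sup m ≤ descents r a :=
  Finset.sup_le fun α _ => ha α ▸ card_fiber_le_descents a α

end LowerBound

section Layers

variable {β : Type*} [DecidableEq β]

def layers (m : β →₀ ℕ) : Finset (ℕ ×ₗ β) :=
  m.support.biUnion fun α => (range (m α)).image fun j => toLex (j, α)

lemma mem_layers {m : β →₀ ℕ} {x : ℕ ×ₗ β} : x ∈ layers m ↔ (ofLex x).1 < m (ofLex x).2 := by
  simp only [layers, mem_biUnion, mem_image, mem_range, Finsupp.mem_support_iff]
  constructor
  · rintro ⟨α, -, j, hj, rfl⟩
    exact hj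
  · exact fun h => ⟨(ofLex x).2, by omega, (ofLex x).1, h, rfl⟩

lemma card_filter_layers (m : β →₀ ℕ) (α : β) : #{x ∈ layers m | (ofLex x).2 = α} = m α := by
  have : {x ∈ layers m | (ofLex x).2 = α} = (range (m α)).image fun j => toLex (j, α) := by
    ext x
    simp only [mem_filter, mem_layers, mem_image, mem_range]
    constructor
    · rintro ⟨hx, rfl⟩
      exact ⟨_, hx, rfl⟩
    · rintro ⟨j, hj, rfl⟩
      exact ⟨hj, rfl⟩
  rw [this, card_image_of_injective _ fun i j h => by simpa using h, card_range]

lemma card_layers (m : β →₀ ℕ) : #(layers m) = m.sum fun _ k => k := by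
  rw [card_eq_sum_card_fiberwise (f := fun x => (ofLex x).2) (t := m.support)]
  · exact sum_congr rfl fun α _ => card_filter_layers m α
  · exact fun x hx => Finsupp.mem_support_iff.2 (Nat.zero_lt_of_lt (mem_layers.1 hx)).ne'

end Layers

section UpperBound

variable {r : ℕ} [NeZero r]

lemma descents_le_of_strictMono_val (g : ZMod r → ℕ ×ₗ ℝ)
    (hg : ∀ s t : ZMod r, s.val < t.val → g s < g t) {M : ℕ} (hM : ∀ t, (ofLex (g t)).1 < M) :
    descents r (fun t => (ofLex (g t)).2) ≤ M := by
  have key : ∀ s t : ZMod r, s.val < t.val → (ofLex (g (s + 1))).2 ≤ (ofLex (g s)).2 →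
      (ofLex (g s)).1 < (ofLex (g t)).1 := by
    intro s t hst hdesc
    have hs1 : (s + 1).val = s.val + 1 := ZMod.val_add_one_of_lt (by have := t.val_lt; omega)
    have hstep : (ofLex (g s)).1 < (ofLex (g (s + 1))).1 :=
      (Prod.Lex.lt_iff.1 (hg s (s + 1) (by omega))).resolve_right
        fun h => (h.2.trans_le hdesc).false
    have hle : g (s + 1) ≤ g t := by
      rcases (show (s + 1).val ≤ t.val by omega).lt_or_eq with h | h
      · exact (hg _ _ h).le
      · rw [ZMod.val_injective r h]
    exact hstep.trans_le (Prod.Lex.monotone_fst_ofLex hle)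
  calc descents r (fun t => (ofLex (g t)).2) ≤ #(range M) := by
        refine card_le_card_of_injOn (fun t => (ofLex (g t)).1) (fun t _ => by simp [hM]) ?_
        intro s hs t ht h
        simp only [coe_filter, mem_univ, true_and, Set.mem_ofPred_eq] at hs ht
        by_contra hne
        rcases Nat.lt_or_gt_of_ne ((ZMod.val_injective r).ne hne) with hlt | hlt
        · exact (key s t hlt hs).ne h
        · exact (key t s hlt ht).ne h.symm
    _ = M := card_range M

lemma isArrangement_of_image_eq_layers {m : ℝ →₀ ℕ} {g : ZMod r → ℕ ×ₗ ℝ}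
    (hinj : Function.Injective g) (himg : univ.image g = layers m) :
    IsArrangement r m fun t => (ofLex (g t)).2 := by
  intro α
  rw [← card_filter_layers m α, ← himg, filter_image, card_image_of_injective _ hinj]

lemma exists_isArrangement_descents_le (m : ℝ →₀ ℕ) (hmass : (m.sum fun _ k => k) = r) :
    ∃ a : ZMod r → ℝ, IsArrangement r m a ∧ descents r a ≤ m.support.sup m := by
  set f := (layers m).orderEmbOfFin ((card_layers m).trans hmass)
  set g : ZMod r → ℕ ×ₗ ℝ := fun t => f ⟨t.val, t.val_lt⟩
  have hmem : ∀ t, g t ∈ layers m := fun t => orderEmbOfFin_mem _ _ _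
  have hinj : Function.Injective g := fun s t h =>
    ZMod.val_injective r (congrArg Fin.val (f.injective h))
  have himg : univ.image g = layers m := by
    refine eq_of_subset_of_card_le (fun x hx => ?_) ?_
    · obtain ⟨t, -, rfl⟩ := mem_image.1 hx
      exact hmem t
    · rw [card_image_of_injective _ hinj, card_univ, ZMod.card, card_layers, hmass]
  refine ⟨_, isArrangement_of_image_eq_layers hinj himg,
    descents_le_of_strictMono_val g (fun s t h => f.strictMono h) fun t => ?_⟩
  have hlt := mem_layers.1 (hmem t)
  exact hlt.trans_le (le_sup (Finsupp.mem_support_iff.2 (Nat.zero_lt_of_lt hlt).ne'))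

end UpperBound

theorem min_descents_eq_max_multiplicity_general (r : ℕ) [NeZero r] (m : ℝ →₀ ℕ)
    (hmass : (m.sum fun _ k => k) = r) :
    (∀ a : ZMod r → ℝ, IsArrangement r m a → m.support.sup m ≤ descents r a) ∧
    (∃ a : ZMod r → ℝ, IsArrangement r m a ∧ descents r a = m.support.sup m) := by
  obtain ⟨a, ha, hle⟩ := exists_isArrangement_descents_le m hmass
  exact ⟨fun _ ha' => sup_le_descents ha', a, ha, hle.antisymm (sup_le_descents ha)⟩

/-- The minimal number of descents over all arrangements of `m` equals the maximal
multiplicity `max_α m(α)`: every arrangement has at least that many descents, and some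
arrangement achieves it. -/
theorem min_descents_eq_max_multiplicity (r : ℕ) [NeZero r] (hr : 1 ≤ r) (m : ℝ →₀ ℕ)
    (hmass : (m.sum fun _ k => k) = r) :
    (∀ a : ZMod r → ℝ, IsArrangement r m a → m.support.sup m ≤ descents r a) ∧
    (∃ a : ZMod r → ℝ, IsArrangement r m a ∧ descents r a = m.support.sup m) :=
  min_descents_eq_max_multiplicity_general r m hmass
end

section
/- Let r ≥ 1 and let m : ℝ → ℕ be finitely supported with support in [0,1), total mass r, and maximal multiplicity p := max_α m(α). Suppose there exists α' in the support of m with m(α') < p. Then for every residue class c ∈ ℤ/rℤ there exists a good arrangement a : ZMod r → ℝ of m (an arrangement with exactly p descents), whose descent positions, listed as t_1 < t_2 < ⋯ < t_p in {1,…,r}, satisfy t_1 + t_2 + ⋯ + t_p ≡ c (mod r). -/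
/-!
Fix a value `β` of maximal multiplicity `p`. Put each value `α` into `m α` of the runs
`0, …, p - 1`, with `β` in every run, and read the runs one after the other, each in increasing
order: this is the lexicographic enumeration of the placed pairs `(run, value)`. Because `β` lies
in every run, each run ends at or above `β` and the next one starts at or below it, so the
descents are exactly the last positions of the runs. There are `p` of them, and the position of
the last element of run `i` is one less than the number of pairs in runs `≤ i`; summing, the
descent positions add up to `-∑ run - p` modulo `r`, the sum running over all placed pairs.
Moving the value `α'` of multiplicity `< p` from run `w` to a free run `w + s` shifts this by `-s`
for any `s < p`, and rotating the arrangement by `k` shifts it by `-p k`, so every residue is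
reached.
-/

open Finset

/-- The set of descent positions of an arrangement: indices `t` (cyclic mod `r`) with
`a t ≥ a (t+1)`. -/
noncomputable def descentSet (r : ℕ) [NeZero r] (a : ZMod r → ℝ) : Finset (ZMod r) :=
  Finset.univ.filter fun t : ZMod r => a (t + 1) ≤ a t

lemma ZMod.val_add_one_eq_or {r : ℕ} [NeZero r] (t : ZMod r) :
    (t + 1).val = t.val + 1 ∨ (t + 1).val = 0 ∧ t.val + 1 = r := by
  have h : (t + 1).val = (t.val + 1) % r := by
    rw [← ZMod.val_natCast, Nat.cast_add_one, ZMod.natCast_zmod_val]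
  rcases (show t.val + 1 ≤ r from t.val_lt).lt_or_eq with hlt | heq
  · exact Or.inl (h.trans (Nat.mod_eq_of_lt hlt))
  · exact Or.inr ⟨by rw [h, heq, Nat.mod_self], heq⟩

lemma ZMod.card_filter_val_le {r : ℕ} [NeZero r] (t : ZMod r) :
    #{u : ZMod r | u.val ≤ t.val} = t.val + 1 := by
  rw [← card_range (t.val + 1)]
  refine card_nbij' ZMod.val (fun n => (n : ZMod r)) ?_ ?_ ?_ ?_
  · intro u hu
    simp_all
  · intro n hn
    have : n < r := (mem_range.1 hn).trans_le t.val_lt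
    simp_all [ZMod.val_cast_of_lt this]
  · intro u _
    simp
  · intro n hn
    exact ZMod.val_cast_of_lt ((mem_range.1 hn).trans_le t.val_lt)

lemma mem_descentSet {r : ℕ} [NeZero r] {a : ZMod r → ℝ} {t : ZMod r} :
    t ∈ descentSet r a ↔ a (t + 1) ≤ a t := by
  simp [descentSet]

lemma IsArrangement.comp_add_right {r : ℕ} [NeZero r] {m : ℝ →₀ ℕ} {a : ZMod r → ℝ}
    (ha : IsArrangement r m a) (k : ZMod r) : IsArrangement r m fun t => a (t + k) :=
  fun α => (card_equiv (Equiv.addRight k) fun t => by simp).trans (ha α)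

lemma descentSet_comp_add_right {r : ℕ} [NeZero r] (a : ZMod r → ℝ) (k : ZMod r) :
    descentSet r (fun t => a (t + k)) = (descentSet r a).map (Equiv.subRight k).toEmbedding := by
  ext t
  simp [mem_descentSet, add_right_comm]

lemma ZMod.exists_natCast_add_mul_eq {r p : ℕ} [NeZero r] (hp : 0 < p) (y : ZMod r) :
    ∃ s < p, ∃ k : ZMod r, (s : ZMod r) + p * k = y :=
  ⟨y.val % p, Nat.mod_lt _ hp, (y.val / p : ℕ), by
    rw [← Nat.cast_mul, ← Nat.cast_add, Nat.mod_add_div, ZMod.natCast_zmod_val]⟩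

lemma sum_range_card_filter_le {ι : Type*} (s : Finset ι) (f : ι → ℕ) (p : ℕ) :
    ∑ i ∈ range p, #{z ∈ s | f z ≤ i} = ∑ z ∈ s, (p - f z) := by
  simp_rw [card_filter]
  rw [sum_comm]
  refine sum_congr rfl fun z _ => ?_
  rw [← card_filter, ← Nat.card_Ico (f z) p]
  congr 1
  ext i
  simp only [mem_filter, mem_range, mem_Ico]
  omega

section SortedEnum

variable {α : Type*} [LinearOrder α] {r : ℕ} [NeZero r] {E : Finset α} (hE : #E = r)

def sortedEnum (t : ZMod r) : α :=
  E.orderEmbOfFin hE ⟨t.val, t.val_lt⟩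

lemma sortedEnum_mem (t : ZMod r) : sortedEnum hE t ∈ E :=
  orderEmbOfFin_mem E hE _

lemma sortedEnum_le_sortedEnum {t u : ZMod r} : sortedEnum hE t ≤ sortedEnum hE u ↔ t.val ≤ u.val :=
  (E.orderEmbOfFin hE).le_iff_le

lemma sortedEnum_injective : Function.Injective (sortedEnum hE) := fun _ _ h =>
  ZMod.val_injective r (Fin.mk.inj_iff.1 ((E.orderEmbOfFin hE).injective h))

lemma image_sortedEnum_univ : univ.image (sortedEnum hE) = E := by
  refine eq_of_subset_of_card_le (fun x hx => ?_) ?_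
  · obtain ⟨t, -, rfl⟩ := mem_image.1 hx
    exact sortedEnum_mem hE t
  · rw [card_image_of_injective _ (sortedEnum_injective hE), card_univ, ZMod.card, hE]

lemma exists_sortedEnum_eq {x : α} (hx : x ∈ E) : ∃ t, sortedEnum hE t = x := by
  rw [← image_sortedEnum_univ hE] at hx
  simpa using hx

lemma card_filter_sortedEnum (P : α → Prop) [DecidablePred P] :
    #{t | P (sortedEnum hE t)} = #{x ∈ E | P x} := by
  conv_rhs => rw [← image_sortedEnum_univ hE, filter_image]
  exact (card_image_of_injective _ (sortedEnum_injective hE)).symm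

lemma card_filter_le_sortedEnum (t : ZMod r) : #{x ∈ E | x ≤ sortedEnum hE t} = t.val + 1 := by
  rw [← card_filter_sortedEnum hE]
  simp_rw [sortedEnum_le_sortedEnum]
  exact ZMod.card_filter_val_le t

lemma sortedEnum_add_one_cases (t : ZMod r) :
    (sortedEnum hE t < sortedEnum hE (t + 1) ∧
        ∀ x ∈ E, x ≤ sortedEnum hE t ∨ sortedEnum hE (t + 1) ≤ x) ∨
      ∀ x ∈ E, x ≤ sortedEnum hE t ∧ sortedEnum hE (t + 1) ≤ x := by
  have hall : ∀ x ∈ E, ∃ u, sortedEnum hE u = x := fun x hx => exists_sortedEnum_eq hE hx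
  simp only [lt_iff_le_not_ge, sortedEnum_le_sortedEnum]
  rcases (t.val_add_one_eq_or) with h | ⟨h, hwrap⟩
  · refine Or.inl ⟨by omega, fun x hx => ?_⟩
    obtain ⟨u, rfl⟩ := hall x hx
    rw [sortedEnum_le_sortedEnum, sortedEnum_le_sortedEnum]
    omega
  · refine Or.inr fun x hx => ?_
    obtain ⟨u, rfl⟩ := hall x hx
    rw [sortedEnum_le_sortedEnum, sortedEnum_le_sortedEnum]
    have := u.val_lt
    omega

end SortedEnum

section Runs

variable {ι α : Type*} [LinearOrder ι] [LinearOrder α] {E : Finset (ι ×ₗ α)}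

def runs (E : Finset (ι ×ₗ α)) : Finset ι := E.image fun x => (ofLex x).1

def IsRunMax (E : Finset (ι ×ₗ α)) (x : ι ×ₗ α) : Prop :=
  ∀ z ∈ E, (ofLex z).1 = (ofLex x).1 → z ≤ x

def IsRunMin (E : Finset (ι ×ₗ α)) (y : ι ×ₗ α) : Prop :=
  ∀ z ∈ E, (ofLex z).1 = (ofLex y).1 → y ≤ z

instance : DecidablePred (IsRunMax E) := fun _ => by
  unfold IsRunMax; infer_instance

lemma le_snd_of_isRunMax {β : α} {x : ι ×ₗ α} (hβ : toLex ((ofLex x).1, β) ∈ E)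
    (hx : IsRunMax E x) : β ≤ (ofLex x).2 := by
  have := hx _ hβ rfl
  rw [Prod.Lex.le_iff] at this
  simpa using this

lemma snd_le_of_isRunMin {β : α} {y : ι ×ₗ α} (hβ : toLex ((ofLex y).1, β) ∈ E)
    (hy : IsRunMin E y) : (ofLex y).2 ≤ β := by
  have := hy _ hβ rfl
  rw [Prod.Lex.le_iff] at this
  simpa using this

lemma image_fst_filter_isRunMax :
    (E.filter (IsRunMax E)).image (fun x => (ofLex x).1) = runs E := by
  refine Subset.antisymm (image_subset_image (filter_subset _ _)) fun i hi => ?_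
  obtain ⟨x, hx, rfl⟩ := mem_image.1 hi
  have hne : (E.filter fun z => (ofLex z).1 = (ofLex x).1).Nonempty := ⟨x, by simp [hx]⟩
  have hmax := (E.filter fun z => (ofLex z).1 = (ofLex x).1).max'_mem hne
  rw [mem_filter] at hmax
  refine mem_image.2 ⟨_, mem_filter.2 ⟨hmax.1, fun z hz hzx => ?_⟩, hmax.2⟩
  exact le_max' _ _ (mem_filter.2 ⟨hz, hzx.trans hmax.2⟩)

lemma injOn_fst_filter_isRunMax :
    Set.InjOn (fun x : ι ×ₗ α => (ofLex x).1) (E.filter (IsRunMax E)) := by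
  intro x hx y hy hxy
  rw [coe_filter] at hx hy
  exact le_antisymm (hy.2 x hx.1 hxy) (hx.2 y hy.1 hxy.symm)

lemma filter_le_of_isRunMax {x : ι ×ₗ α} (hx : IsRunMax E x) :
    E.filter (· ≤ x) = E.filter fun z => (ofLex z).1 ≤ (ofLex x).1 := by
  refine filter_congr fun z hz => ⟨Prod.Lex.monotone_fst z x, fun h => ?_⟩
  rcases h.lt_or_eq with hlt | heq
  · exact Prod.Lex.le_iff.2 (Or.inl hlt)
  · exact hx z hz heq

end Runs

section LexArrangement

variable {ι : Type*} [LinearOrder ι] {r : ℕ} [NeZero r] {E : Finset (ι ×ₗ ℝ)} (hE : #E = r)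

noncomputable def lexArrangement (t : ZMod r) : ℝ := (ofLex (sortedEnum hE t)).2

lemma isArrangement_lexArrangement {m : ℝ →₀ ℕ}
    (hm : ∀ α, #{x ∈ E | (ofLex x).2 = α} = m α) : IsArrangement r m (lexArrangement hE) :=
  fun α => (card_filter_sortedEnum hE (fun x => (ofLex x).2 = α)).trans (hm α)

variable {β : ℝ} (hβ : ∀ x ∈ E, toLex ((ofLex x).1, β) ∈ E)
include hβ

lemma mem_descentSet_lexArrangement (t : ZMod r) :
    t ∈ descentSet r (lexArrangement hE) ↔ IsRunMax E (sortedEnum hE t) := by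
  set x := sortedEnum hE t
  set y := sortedEnum hE (t + 1)
  have hy : y ∈ E := sortedEnum_mem hE _
  have descent : IsRunMax E x → IsRunMin E y → (ofLex y).2 ≤ (ofLex x).2 := fun hmax hmin =>
    (snd_le_of_isRunMin (hβ y hy) hmin).trans
      (le_snd_of_isRunMax (hβ x (sortedEnum_mem hE t)) hmax)
  rw [mem_descentSet]
  rcases sortedEnum_add_one_cases hE t with ⟨hxy, hgap⟩ | hwrap
  · by_cases hrun : (ofLex x).1 = (ofLex y).1
    · have : (ofLex x).2 < (ofLex y).2 := by
        rcases Prod.Lex.lt_iff.1 hxy with h | h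
        · exact absurd hrun h.ne
        · exact h.2
      exact iff_of_false this.not_ge fun h => (h y hy hrun.symm).not_gt hxy
    · have hlt : (ofLex x).1 < (ofLex y).1 := (Prod.Lex.monotone_fst _ _ hxy.le).lt_of_ne hrun
      have hmax : IsRunMax E x := fun z hz hzx => (hgap z hz).resolve_right fun hyz =>
        (Prod.Lex.monotone_fst _ _ hyz).not_gt (hzx ▸ hlt)
      refine iff_of_true (descent hmax fun z hz hzy => (hgap z hz).resolve_left fun hzx => ?_) hmax
      exact (Prod.Lex.monotone_fst _ _ hzx).not_gt (hzy ▸ hlt)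
  · have hmax : IsRunMax E x := fun z hz _ => (hwrap z hz).1
    exact iff_of_true (descent hmax fun z hz _ => (hwrap z hz).2) hmax

lemma image_sortedEnum_descentSet :
    (descentSet r (lexArrangement hE)).image (sortedEnum hE) = E.filter (IsRunMax E) := by
  have : descentSet r (lexArrangement hE) = univ.filter fun t => IsRunMax E (sortedEnum hE t) := by
    ext t
    simp [mem_descentSet_lexArrangement hE hβ t]
  rw [this, ← filter_image, image_sortedEnum_univ]

lemma card_descentSet_lexArrangement : #(descentSet r (lexArrangement hE)) = #(runs E) := by
  rw [← card_image_of_injective _ (sortedEnum_injective hE), image_sortedEnum_descentSet hE hβ,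
    ← image_fst_filter_isRunMax, card_image_of_injOn injOn_fst_filter_isRunMax]

lemma sum_val_add_one_descentSet_lexArrangement :
    ∑ t ∈ descentSet r (lexArrangement hE), (t.val + 1) =
      ∑ i ∈ runs E, #{x ∈ E | (ofLex x).1 ≤ i} := by
  calc ∑ t ∈ descentSet r (lexArrangement hE), (t.val + 1)
      = ∑ t ∈ descentSet r (lexArrangement hE), #{x ∈ E | x ≤ sortedEnum hE t} := by
        simp_rw [card_filter_le_sortedEnum]
    _ = ∑ y ∈ E.filter (IsRunMax E), #{x ∈ E | x ≤ y} := by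
        rw [← image_sortedEnum_descentSet hE hβ,
          sum_image fun _ _ _ _ h => sortedEnum_injective hE h]
    _ = ∑ y ∈ E.filter (IsRunMax E), #{x ∈ E | (ofLex x).1 ≤ (ofLex y).1} :=
        sum_congr rfl fun y hy => by rw [filter_le_of_isRunMax (mem_filter.1 hy).2]
    _ = ∑ i ∈ runs E, #{x ∈ E | (ofLex x).1 ≤ i} := by
        rw [← image_fst_filter_isRunMax, sum_image injOn_fst_filter_isRunMax]

end LexArrangement

structure IsRunPlacement (m : ℝ →₀ ℕ) (p : ℕ) (β : ℝ) (E : Finset (ℕ ×ₗ ℝ)) : Prop where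
  card_filter_snd : ∀ α, #{x ∈ E | (ofLex x).2 = α} = m α
  fst_lt : ∀ x ∈ E, (ofLex x).1 < p
  mem_of_lt : ∀ i < p, toLex (i, β) ∈ E

namespace IsRunPlacement

variable {m : ℝ →₀ ℕ} {p : ℕ} {β : ℝ} {E : Finset (ℕ ×ₗ ℝ)} (hE : IsRunPlacement m p β E)
include hE

lemma runs_eq : runs E = range p := by
  ext i
  refine ⟨fun hi => ?_, fun hi => mem_image.2 ⟨_, hE.mem_of_lt i (mem_range.1 hi), rfl⟩⟩
  obtain ⟨x, hx, rfl⟩ := mem_image.1 hi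
  exact mem_range.2 (hE.fst_lt x hx)

lemma mem_run_of_mem : ∀ x ∈ E, toLex ((ofLex x).1, β) ∈ E := fun x hx =>
  hE.mem_of_lt _ (hE.fst_lt x hx)

lemma card_eq {r : ℕ} (hmass : (m.sum fun _ k => k) = r) : #E = r := by
  have hsupp : ∀ x ∈ E, (ofLex x).2 ∈ m.support := fun x hx => by
    rw [Finsupp.mem_support_iff, ← hE.card_filter_snd, ← pos_iff_ne_zero, card_pos]
    exact ⟨x, mem_filter.2 ⟨hx, rfl⟩⟩
  rw [card_eq_sum_card_fiberwise hsupp, ← hmass]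
  exact sum_congr rfl fun α _ => hE.card_filter_snd α

lemma exists_arrangement {r : ℕ} [NeZero r] (hmass : (m.sum fun _ k => k) = r) :
    ∃ a : ZMod r → ℝ, IsArrangement r m a ∧ #(descentSet r a) = p ∧
      ∑ t ∈ descentSet r a, t = -((∑ x ∈ E, (ofLex x).1 : ℕ) : ZMod r) - p := by
  have hcard := hE.card_eq hmass
  have hD := card_descentSet_lexArrangement hcard hE.mem_run_of_mem
  rw [hE.runs_eq, card_range] at hD
  refine ⟨lexArrangement hcard, isArrangement_lexArrangement hcard hE.card_filter_snd, hD, ?_⟩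
  have hnat : ∑ t ∈ descentSet r (lexArrangement hcard), (t.val + 1) +
      ∑ x ∈ E, (ofLex x).1 = r * p := by
    rw [sum_val_add_one_descentSet_lexArrangement hcard hE.mem_run_of_mem, hE.runs_eq,
      sum_range_card_filter_le, ← sum_add_distrib,
      sum_congr rfl fun x hx => Nat.sub_add_cancel (hE.fst_lt x hx).le, sum_const, hcard,
      smul_eq_mul]
  have hzmod := congrArg (Nat.cast : ℕ → ZMod r) hnat
  push_cast [ZMod.natCast_zmod_val, ZMod.natCast_self] at hzmod ⊢
  rw [sum_add_distrib, sum_const, hD, nsmul_eq_mul, mul_one] at hzmod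
  linear_combination hzmod

lemma move {α : ℝ} (hαβ : α ≠ β) {w u : ℕ}
    (hw : toLex (w, α) ∈ E) (hu : toLex (u, α) ∉ E.erase (toLex (w, α))) (hup : u < p) :
    IsRunPlacement m p β (insert (toLex (u, α)) (E.erase (toLex (w, α)))) where
  card_filter_snd γ := by
    rw [filter_insert, filter_erase, ofLex_toLex]
    by_cases hγ : α = γ
    · subst hγ
      have hwα : toLex (w, α) ∈ {x ∈ E | (ofLex x).2 = α} := mem_filter.2 ⟨hw, rfl⟩
      have hu' : toLex (u, α) ∉ {x ∈ E | (ofLex x).2 = α}.erase (toLex (w, α)) :=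
        fun h => hu (erase_subset_erase _ (filter_subset _ _) h)
      rw [if_pos rfl, card_insert_of_notMem hu', card_erase_of_mem hwα, hE.card_filter_snd]
      have : 0 < m α := hE.card_filter_snd α ▸ card_pos.2 ⟨_, hwα⟩
      omega
    · rw [if_neg hγ, erase_eq_of_notMem fun h => hγ (by simpa using (mem_filter.1 h).2),
        hE.card_filter_snd]
  fst_lt x hx := by
    rcases mem_insert.1 hx with rfl | hx
    · exact hup
    · exact hE.fst_lt x (mem_of_mem_erase hx)
  mem_of_lt i hi := mem_insert_of_mem <| mem_erase.2
    ⟨fun h => hαβ (Prod.ext_iff.1 (toLex.injective h)).2.symm, hE.mem_of_lt i hi⟩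

end IsRunPlacement

noncomputable def basePlacement (m : ℝ →₀ ℕ) : Finset (ℕ ×ₗ ℝ) :=
  m.support.biUnion fun α => (range (m α)).image fun i => toLex (i, α)

lemma mem_basePlacement {m : ℝ →₀ ℕ} {i : ℕ} {α : ℝ} :
    toLex (i, α) ∈ basePlacement m ↔ i < m α := by
  simp only [basePlacement, mem_biUnion, mem_image, mem_range, Finsupp.mem_support_iff,
    EmbeddingLike.apply_eq_iff_eq, Prod.mk.injEq]
  constructor
  · rintro ⟨α, -, i, hi, rfl, rfl⟩
    exact hi
  · intro hi
    exact ⟨α, by omega, i, hi, rfl, rfl⟩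

lemma isRunPlacement_basePlacement {m : ℝ →₀ ℕ} {p : ℕ} {β : ℝ} (hβ : m β = p)
    (hle : ∀ α, m α ≤ p) : IsRunPlacement m p β (basePlacement m) where
  card_filter_snd α := by
    have : {x ∈ basePlacement m | (ofLex x).2 = α} = (range (m α)).image fun i => toLex (i, α) := by
      ext x
      obtain ⟨⟨i, γ⟩, rfl⟩ := toLex.surjective x
      simp only [mem_filter, mem_basePlacement, mem_image, mem_range, ofLex_toLex,
        EmbeddingLike.apply_eq_iff_eq, Prod.mk.injEq]
      constructor
      · rintro ⟨hi, rfl⟩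
        exact ⟨i, hi, rfl, rfl⟩
      · rintro ⟨j, hj, rfl, rfl⟩
        exact ⟨hj, rfl⟩
    rw [this, card_image_of_injective _ fun i j h => by simpa using h, card_range]
  fst_lt x hx := by
    obtain ⟨⟨i, γ⟩, rfl⟩ := toLex.surjective x
    exact (mem_basePlacement.1 hx).trans_le (hle γ)
  mem_of_lt i hi := mem_basePlacement.2 (hβ ▸ hi)

lemma exists_isRunPlacement_sum_eq {m : ℝ →₀ ℕ} {p : ℕ} {β : ℝ} (hβ : m β = p)
    (hle : ∀ α, m α ≤ p) {α : ℝ} (hα : α ∈ m.support) (hαp : m α < p) {s : ℕ} (hs : s < p) :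
    ∃ E, IsRunPlacement m p β E ∧
      ∑ x ∈ E, (ofLex x).1 = ∑ x ∈ basePlacement m, (ofLex x).1 + s := by
  have hq : 0 < m α := pos_iff_ne_zero.2 (Finsupp.mem_support_iff.1 hα)
  -- move `α` from run `w` to run `w + s` (no move at all when `s = 0`)
  obtain ⟨w, hw, hws, hwq⟩ : ∃ w < m α, w + s < p ∧ (s = 0 ∨ m α ≤ w + s) :=
    ⟨if s = 0 then 0 else max (m α) s - s, by split_ifs <;> omega⟩
  have hu : toLex (w + s, α) ∉ (basePlacement m).erase (toLex (w, α)) := by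
    simp only [mem_erase, mem_basePlacement, ne_eq, EmbeddingLike.apply_eq_iff_eq, Prod.mk.injEq,
      and_true]
    omega
  refine ⟨_, (isRunPlacement_basePlacement hβ hle).move (by rintro rfl; omega)
    (mem_basePlacement.2 hw) hu hws, ?_⟩
  have := sum_erase_add _ (fun x => (ofLex x).1) (mem_basePlacement.2 hw)
  rw [sum_insert hu]
  simp only [ofLex_toLex] at this ⊢
  omega

theorem good_arrangement_descent_sum_general (r : ℕ) [NeZero r] (m : ℝ →₀ ℕ)
    (hmass : (m.sum fun _ k => k) = r)
    (p : ℕ) (hp : p = m.support.sup m)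
    (hlt : ∃ α' ∈ m.support, m α' < p)
    (c : ZMod r) :
    ∃ a : ZMod r → ℝ, IsArrangement r m a ∧
      (descentSet r a).card = p ∧
      (∑ t ∈ descentSet r a, t) = c := by
  obtain ⟨α', hα', hα'p⟩ := hlt
  obtain ⟨β, -, hβ⟩ := exists_mem_eq_sup m.support ⟨α', hα'⟩ m
  have hle : ∀ α, m α ≤ p := fun α => by
    by_cases hα : α ∈ m.support
    · exact hp ▸ le_sup hα
    · simp [Finsupp.notMem_support_iff.1 hα]
  obtain ⟨s, hs, k, hsk⟩ := ZMod.exists_natCast_add_mul_eq (Nat.zero_lt_of_lt hα'p)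
    (-(c + p + (∑ x ∈ basePlacement m, (ofLex x).1 : ℕ)) : ZMod r)
  obtain ⟨E, hE, hsum⟩ := exists_isRunPlacement_sum_eq (hβ.symm.trans hp.symm) hle hα' hα'p hs
  obtain ⟨a, ha, hcard, hdesc⟩ := hE.exists_arrangement hmass
  refine ⟨fun t => a (t + k), ha.comp_add_right k, ?_, ?_⟩
  · rw [descentSet_comp_add_right, card_map, hcard]
  · rw [descentSet_comp_add_right, sum_map]
    simp only [Equiv.coe_toEmbedding, Equiv.subRight_apply]
    rw [sum_sub_distrib, hdesc, sum_const, hcard, hsum, nsmul_eq_mul]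
    push_cast at hsk ⊢
    linear_combination -hsk

/-- If `m` has support in `[0,1)`, total mass `r`, maximal multiplicity `p`, and some value
of `m` on its support is `< p`, then for every residue class `c` mod `r` there is a good
arrangement of `m` (one with exactly `p` descents) whose descent positions sum to `c`
modulo `r`. -/
theorem good_arrangement_descent_sum (r : ℕ) [NeZero r] (hr : 1 ≤ r) (m : ℝ →₀ ℕ)
    (hsupp : ∀ α ∈ m.support, 0 ≤ α ∧ α < 1)
    (hmass : (m.sum fun _ k => k) = r)
    (p : ℕ) (hp : p = m.support.sup m)
    (hlt : ∃ α' ∈ m.support, m α' < p)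
    (c : ZMod r) :
    ∃ a : ZMod r → ℝ, IsArrangement r m a ∧
      (descentSet r a).card = p ∧
      (∑ t ∈ descentSet r a, t) = c :=
  good_arrangement_descent_sum_general r m hmass p hp hlt c
end

section
/- Let L be a multiplicative abelian group, g = (g_1,…,g_n) a local monodromy vector of rank r on L, and β a convoluter. Suppose g is 1-generic: there is no choice of elements a_i in the support of g_i (i = 1,…,n) with a_1·a_2·⋯·a_n = 1. Suppose moreover that (β^{H_i})^{−1} lies in the support of g_i for each i. Then: (i) β^T ≠ 1; (ii) for every k and every α in the support of g_k, β^T·β^{H_k}·α ≠ 1; and (iii) the inverse pair satisfies the same conventions, namely (β^T)^{−1} ≠ 1 and for every i and every φ in the support of κ_i(β,g), (β^T)^{−1}·(β^{V_i})^{−1}·φ ≠ 1. -/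
open Finset

/-! The tuple `((β^{H_i})⁻¹)_i` has product `β^T`, and replacing its `k`-th entry by `α` turns
the product into `β^T β^{H_k} α`; so, for a 1-generic `g` with `(β^{H_i})⁻¹ ∈ supp g_i`, neither
can be `1`. For the inverse pair, `(β^T)⁻¹ (β^{V_i})⁻¹ φ = 1` means `φ = β^{V_i} β^T`, and there the
two last terms of `κ_i` cancel (`(β^{H_i})⁻¹ β^{U_i} = β^{V_i} β^T`) while the first vanishes since
`β^T ≠ 1`; hence `φ` is not in the support of `κ_i(β,g)`. -/

theorem Finset.prod_update_eq_div_mul {ι G : Type*} [Fintype ι] [DecidableEq ι] [CommGroup G]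
    (f : ι → G) (k : ι) (a : G) :
    ∏ i, Function.update f k a i = a / f k * ∏ i, f i := by
  rw [prod_update_of_mem (mem_univ k), sdiff_singleton_eq_erase,
    ← mul_prod_erase univ f (mem_univ k), ← mul_assoc, div_mul_cancel]

namespace Convoluter

variable {L : Type*} [CommGroup L] {n : ℕ} (β : Convoluter L n)

theorem prod_inv_H : ∏ i, (β.H i)⁻¹ = β.T := by
  rw [prod_inv_distrib, inv_eq_iff_mul_eq_one, mul_comm]
  exact β.relH

theorem prod_update_inv_H (k : Fin n) (α : L) :
    ∏ i, Function.update (fun i => (β.H i)⁻¹) k α i = β.T * β.H k * α := by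
  rw [prod_update_eq_div_mul, prod_inv_H, div_inv_eq_mul]
  ac_rfl

theorem inv_H_mul_U (i : Fin n) : (β.H i)⁻¹ * β.U i = β.V i * β.T := by
  rw [β.relU i, mul_assoc, inv_mul_cancel_left]

end Convoluter

theorem katz_apply_V_mul_T {L : Type*} [CommGroup L] {n : ℕ} (β : Convoluter L n)
    (g : Fin n → (L →₀ ℤ)) (r : ℤ) (i : Fin n) (hT : β.T ≠ 1) :
    katz β g r i (β.V i * β.T) = 0 := by
  have hV : β.V i * β.T ≠ β.V i := fun h => hT (mul_eq_left.mp h)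
  have hmap : Finsupp.mapDomain (· * β.U i) (g i) (β.V i * β.T) = g i (β.H i)⁻¹ := by
    rw [← β.inv_H_mul_U]
    exact Finsupp.mapDomain_apply (mul_left_injective _) _ _
  simp only [katz, Finsupp.add_apply, Finsupp.sub_apply, hmap, Finsupp.single_eq_of_ne hV,
    Finsupp.single_eq_same]
  ring

theorem one_generic_conventions_general {L : Type*} [CommGroup L] {n : ℕ} (r : ℤ)
    (g : Fin n → (L →₀ ℤ)) (β : Convoluter L n)
    (h1gen : ¬ ∃ a : Fin n → L, (∀ i, a i ∈ (g i).support) ∧ (∏ i, a i) = 1)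
    (hH : ∀ i, (β.H i)⁻¹ ∈ (g i).support) :
    β.T ≠ 1 ∧
    (∀ k : Fin n, ∀ α ∈ (g k).support, β.T * β.H k * α ≠ 1) ∧
    ((β.T)⁻¹ ≠ 1 ∧
      ∀ i : Fin n, ∀ φ ∈ (katz β g r i).support, (β.T)⁻¹ * (β.V i)⁻¹ * φ ≠ 1) := by
  have hT : β.T ≠ 1 := fun hT1 => h1gen ⟨_, hH, by rw [β.prod_inv_H, hT1]⟩
  have hconv : ∀ k, ∀ α ∈ (g k).support, β.T * β.H k * α ≠ 1 := by
    intro k α hα h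
    refine h1gen ⟨_, ?_, by rw [β.prod_update_inv_H k α, h]⟩
    exact (Function.forall_update_iff _ fun i a => a ∈ (g i).support).mpr
      ⟨hα, fun i _ => hH i⟩
  refine ⟨hT, hconv, inv_ne_one.mpr hT, fun i φ hφ h => ?_⟩
  have hφ_eq : φ = β.V i * β.T := by
    rw [← mul_inv_rev, inv_mul_eq_one] at h
    exact h.symm
  rw [hφ_eq, Finsupp.mem_support_iff] at hφ
  exact hφ (katz_apply_V_mul_T β g r i hT)

/-- If `g` is 1-generic (no product of eigenvalues `a_i ∈ supp(g_i)` equals `1`) and each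
`(β^{H_i})⁻¹` lies in the support of `g_i`, then the conventions hold for `(β, g)`:
(i) `β^T ≠ 1`; (ii) `β^T β^{H_k} α ≠ 1` for all eigenvalues `α` of `g_k`; and (iii) the
same conventions hold for the inverse pair `(c*β*, κ(β,g))`. -/
theorem one_generic_conventions {L : Type*} [CommGroup L] {n : ℕ} (hn : 1 ≤ n) (r : ℤ)
    (g : Fin n → (L →₀ ℤ)) (hg : ∀ i, divDeg (g i) = r) (β : Convoluter L n)
    (h1gen : ¬ ∃ a : Fin n → L, (∀ i, a i ∈ (g i).support) ∧ (∏ i, a i) = 1)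
    (hH : ∀ i, (β.H i)⁻¹ ∈ (g i).support) :
    β.T ≠ 1 ∧
    (∀ k : Fin n, ∀ α ∈ (g k).support, β.T * β.H k * α ≠ 1) ∧
    ((β.T)⁻¹ ≠ 1 ∧
      ∀ i : Fin n, ∀ φ ∈ (katz β g r i).support, (β.T)⁻¹ * (β.V i)⁻¹ * φ ≠ 1) :=
  one_generic_conventions_general r g β h1gen hH
end
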